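/- arXiv:2602.06239 — 5 statements merged into one kernel-verified Lean document; each statement's English description precedes it below -/
import Mathlib

section
/- The inverse of the pessimistic sigmoid σ_pess(Δ) = e^{Δ/2}/(e^{Δ/2}+e^{-Δ/2}+λ) is given by σ_pess^{-1}(y) = 2·log( (λy + √(λ²y² + 4y - 4y²)) / (2(1-y)) ) for y ∈ (0,1): that is, σ_pess(σ_pess^{-1}(y)) = y for all y in (0,1) with λ²y² + 4y - 4y² > 0. -/
/-!
With `u = exp (Δ / 2)` the pessimistic sigmoid is `u / (u + u⁻¹ + λ)`, and the equation
`u / (u + u⁻¹ + λ) = y` clears to the quadratic `(1 - y) u² - λ y u - y = 0`. The formula in the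
statement is `2 log u` for the `+√` root `u` of this quadratic, which is positive because
`√(λ²y² + 4y(1 - y)) > |λ| y` for `y ∈ (0, 1)`.
-/

open Real

noncomputable def pessSigmoid (lam Δ : ℝ) : ℝ :=
  exp (Δ / 2) / (exp (Δ / 2) + exp (-Δ / 2) + lam)

theorem pessSigmoid_two_mul_log (lam : ℝ) {u : ℝ} (hu : 0 < u) :
    pessSigmoid lam (2 * log u) = u / (u + u⁻¹ + lam) := by
  have hhalf : 2 * log u / 2 = log u := by ring
  rw [pessSigmoid, neg_div, hhalf, exp_neg, exp_log hu]

theorem div_add_inv_add_eq_of_quadratic {lam u y : ℝ} (hu : u ≠ 0) (hy : y ≠ 0)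
    (h : (1 - y) * (u * u) + -(lam * y) * u + -y = 0) : u / (u + u⁻¹ + lam) = y := by
  have hden : u + u⁻¹ + lam = u / y := by
    field_simp
    linear_combination -h
  rw [hden, div_div_cancel₀ hu]

theorem neg_lt_sqrt_sq_add (b : ℝ) {c : ℝ} (hc : 0 < c) : -b < √(b ^ 2 + c) :=
  calc -b ≤ |b| := neg_le_abs b
    _ = √(b ^ 2) := (sqrt_sq_eq_abs b).symm
    _ < √(b ^ 2 + c) := sqrt_lt_sqrt (sq_nonneg b) (by linarith)

theorem pess_sigmoid_inverse_general (lam y : ℝ)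
    (hy : y ∈ Set.Ioo (0:ℝ) 1) :
    let g : ℝ := 2 * log ((lam * y + Real.sqrt (lam^2 * y^2 + 4*y - 4*y^2)) / (2 * (1 - y)))
    exp (g/2) / (exp (g/2) + exp (-g/2) + lam) = y := by
  obtain ⟨hy0, hy1⟩ := hy
  set s := √(lam ^ 2 * y ^ 2 + 4 * y - 4 * y ^ 2)
  set u := (lam * y + s) / (2 * (1 - y))
  have hdiscrim : discrim (1 - y) (-(lam * y)) (-y) = s * s := by
    rw [discrim, mul_self_sqrt (by nlinarith)]
    ring
  have hroot : (1 - y) * (u * u) + -(lam * y) * u + -y = 0 := by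
    refine (quadratic_eq_zero_iff (by linarith) hdiscrim u).mpr (Or.inl ?_)
    rw [neg_neg]
  have hu : 0 < u := by
    have hs : -(lam * y) < s := by
      convert neg_lt_sqrt_sq_add (lam * y) (by nlinarith : 0 < 4 * y * (1 - y)) using 2
      ring
    exact div_pos (by linarith) (by linarith)
  change pessSigmoid lam (2 * log u) = y
  rw [pessSigmoid_two_mul_log lam hu]
  exact div_add_inv_add_eq_of_quadratic hu.ne' hy0.ne' hroot

/-- The stated formula inverts the pessimistic sigmoid: for `y ∈ (0,1)` with
`λ²y² + 4y - 4y² > 0`, setting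
`g(y) = 2·log((λy + √(λ²y² + 4y - 4y²))/(2(1-y)))`, one has
`σ_pess(g(y)) = y` where `σ_pess(Δ) = e^{Δ/2}/(e^{Δ/2}+e^{-Δ/2}+λ)`. -/
theorem pess_sigmoid_inverse (lam y : ℝ) (hlam : 0 ≤ lam)
    (hy : y ∈ Set.Ioo (0:ℝ) 1) (hD : 0 < lam^2 * y^2 + 4*y - 4*y^2) :
    let g : ℝ := 2 * log ((lam * y + Real.sqrt (lam^2 * y^2 + 4*y - 4*y^2)) / (2 * (1 - y)))
    exp (g/2) / (exp (g/2) + exp (-g/2) + lam) = y :=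
  pess_sigmoid_inverse_general lam y hy
end

section
/- Upper bound on the composed inverse (Lemma quadbound): for all x ∈ ℝ and λ ≥ 0, 2·log( (λe^x + √(e^x(λ²e^x + 4)))/2 ) ≤ x + λ²e^x + λe^{x/2}. -/
open Real

/-- Upper bound on the composed inverse pessimistic sigmoid:
`2·log((λe^x + √(e^x(λ²e^x + 4)))/2) ≤ x + λ²e^x + λe^{x/2}`. -/
theorem inv_pess_sigmoid_comp_bound (lam x : ℝ) (hlam : 0 ≤ lam) :
    2 * log ((lam * exp x + Real.sqrt (exp x * (lam^2 * exp x + 4))) / 2)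
      ≤ x + lam^2 * exp x + lam * exp (x/2) := by
  set s : ℝ := exp (x/2) with hs_def
  have hs : 0 < s := exp_pos _
  have hE : exp x = s * s := by rw [hs_def, ← exp_add]; ring_nf
  have hEpos : (0:ℝ) < exp x := exp_pos _
  set r : ℝ := Real.sqrt (exp x * (lam^2 * exp x + 4)) with hr_def
  have hArg : (0:ℝ) ≤ exp x * (lam^2 * exp x + 4) := by positivity
  have hr0 : 0 < r := Real.sqrt_pos.mpr (by positivity)
  have hr2 : r^2 = exp x * (lam^2 * exp x + 4) := Real.sq_sqrt hArg
  have hr_le : r ≤ lam * exp x + 2 * s := by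
    have h1 : exp x * (lam^2 * exp x + 4) ≤ (lam * exp x + 2 * s)^2 := by
      nlinarith [mul_nonneg (mul_nonneg hlam hs.le) hEpos.le, hs.le]
    calc r ≤ Real.sqrt ((lam * exp x + 2 * s)^2) := Real.sqrt_le_sqrt h1
      _ = lam * exp x + 2 * s := Real.sqrt_sq (by positivity)
  set A : ℝ := (lam * exp x + r) / 2 with hA_def
  have hA : 0 < A := by positivity
  have key : A^2 ≤ exp x * (1 + lam^2 * exp x + lam * s) := by
    have h2 : lam * exp x * r ≤ lam * exp x * (lam * exp x + 2 * s) :=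
      mul_le_mul_of_nonneg_left hr_le (by positivity)
    nlinarith [hr2]
  have h1 : 2 * log A = x + log (A^2 / exp x) := by
    rw [log_div (by positivity) (exp_ne_zero x), log_exp, log_pow]
    push_cast
    ring
  have h2 : log (A^2 / exp x) ≤ A^2 / exp x - 1 :=
    Real.log_le_sub_one_of_pos (by positivity)
  have h3 : A^2 / exp x ≤ 1 + lam^2 * exp x + lam * s := by
    rw [div_le_iff₀ hEpos]
    linarith [key]
  linarith
end

section
/- Reparameterized form of the inverse pessimistic sigmoid: for y ∈ (0,1) and λ ≥ 0, setting u = y/(1-y), one has 2·log((λy + √(λ²y² + 4y - 4y²))/(2(1-y))) = log(u) + 2·arsinh(λ√u/2), where arsinh(z) = log(z + √(z²+1)). -/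
open Real

/-!
Writing `y = u (1 - y)`, the argument of the logarithm on the left becomes `(λu + √(λ²u² + 4u)) / 2`,
and this equals `√u · (z + √(1 + z²)) = √u · exp (arsinh z)` for `z = λ√u/2`; taking `2 log` gives the claim.
-/

theorem sqrt_mul_exp_arsinh (lam : ℝ) {u : ℝ} (hu : 0 ≤ u) :
    √u * exp (arsinh (lam * √u / 2)) = (lam * u + √(lam ^ 2 * u ^ 2 + 4 * u)) / 2 := by
  have hsqrt : √(lam ^ 2 * u ^ 2 + 4 * u) = 2 * √u * √(1 + (lam * √u / 2) ^ 2) := by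
    have hsq : lam ^ 2 * u ^ 2 + 4 * u = (2 * √u) ^ 2 * (1 + (lam * √u / 2) ^ 2) := by
      linear_combination (-4 - lam ^ 2 * (u + √u ^ 2)) * sq_sqrt hu
    rw [hsq, sqrt_mul (sq_nonneg _), sqrt_sq (by positivity)]
  rw [exp_arsinh, hsqrt]
  linear_combination lam / 2 * sq_sqrt hu

theorem pess_sigmoid_arg_eq_of_lt_one (lam : ℝ) {y : ℝ} (hy : y < 1) :
    (lam * y + √(lam ^ 2 * y ^ 2 + 4 * y - 4 * y ^ 2)) / (2 * (1 - y))
      = (lam * (y / (1 - y)) + √(lam ^ 2 * (y / (1 - y)) ^ 2 + 4 * (y / (1 - y)))) / 2 := by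
  have h1 : 0 < 1 - y := sub_pos.mpr hy
  have hsq : lam ^ 2 * y ^ 2 + 4 * y - 4 * y ^ 2
      = (1 - y) ^ 2 * (lam ^ 2 * (y / (1 - y)) ^ 2 + 4 * (y / (1 - y))) := by
    field_simp
    ring
  rw [hsq, sqrt_mul (sq_nonneg _), sqrt_sq h1.le]
  field_simp

theorem inv_pess_sigmoid_arsinh_general (lam y : ℝ)
    (hy : y ∈ Set.Ioo (0:ℝ) 1) :
    let u : ℝ := y / (1 - y)
    2 * log ((lam * y + Real.sqrt (lam^2 * y^2 + 4*y - 4*y^2)) / (2 * (1 - y)))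
      = log u + 2 * Real.arsinh (lam * Real.sqrt u / 2) := by
  obtain ⟨hy0, hy1⟩ := hy
  intro u
  have hu : 0 < u := div_pos hy0 (sub_pos.mpr hy1)
  rw [pess_sigmoid_arg_eq_of_lt_one lam hy1, ← sqrt_mul_exp_arsinh lam hu.le,
    log_mul (sqrt_pos.mpr hu).ne' (exp_pos _).ne', log_exp, log_sqrt hu.le]
  ring

/-- Reparameterized form of the inverse pessimistic sigmoid: for `y ∈ (0,1)`
and `λ ≥ 0`, with `u = y/(1-y)`,
`2·log((λy + √(λ²y² + 4y - 4y²))/(2(1-y))) = log u + 2·arsinh(λ√u/2)`. -/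
theorem inv_pess_sigmoid_arsinh (lam y : ℝ) (hlam : 0 ≤ lam)
    (hy : y ∈ Set.Ioo (0:ℝ) 1) :
    let u : ℝ := y / (1 - y)
    2 * log ((lam * y + Real.sqrt (lam^2 * y^2 + 4*y - 4*y^2)) / (2 * (1 - y)))
      = log u + 2 * Real.arsinh (lam * Real.sqrt u / 2) :=
  inv_pess_sigmoid_arsinh_general lam y hy
end

section
/- Lipschitz bound for the inverse pessimistic sigmoid: let a = 1/(e^{2R}+1) for R > 0 and λ ≥ 0, and let f(y) = 2[log(λy + √(λ²y² + 4y - 4y²)) - log(2(1-y))]. Then for all y ∈ [a, 1-a], |f'(y)| ≤ (λ+2)/a + (λ²+6)/(2a²). -/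
open Real

/-!
By the chain rule
`f' y = 2 ((λ + D'(y) / (2 √D(y))) / (λ y + √D(y)) + 1 / (1 - y))` with `D(y) = λ²y² + 4y - 4y²`.
On `[a, 1 - a]` we have `D(y) ≥ 4 y (1 - y) ≥ 4a²`, so `√D(y) ≥ 2a` and, as `λ ≥ 0`,
`λ y + √D(y) ≥ 2a`; moreover `|D'(y)| ≤ 2λ² + 12` and `1 - y ≥ a`. Bounding each term gives
`|f' y| ≤ 2 ((λ + (λ² + 6) / (2a)) / (2a) + 1 / a)`, which is the claimed bound.
-/

noncomputable def pessSigmoidDisc (lam y : ℝ) : ℝ := lam ^ 2 * y ^ 2 + 4 * y - 4 * y ^ 2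

noncomputable def invPessSigmoid (lam y : ℝ) : ℝ :=
  2 * (log (lam * y + √(pessSigmoidDisc lam y)) - log (2 * (1 - y)))

section

variable {lam a y : ℝ}

theorem hasDerivAt_pessSigmoidDisc (lam y : ℝ) :
    HasDerivAt (pessSigmoidDisc lam) (2 * lam ^ 2 * y + 4 - 8 * y) y := by
  have hsq : HasDerivAt (fun x : ℝ => x ^ 2) (2 * y) y := by simpa using hasDerivAt_pow 2 y
  exact (((hsq.const_mul (lam ^ 2)).add ((hasDerivAt_id y).const_mul 4)).sub
    (hsq.const_mul 4)).congr_deriv (by ring)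

theorem abs_deriv_pessSigmoidDisc_le (hy₀ : 0 ≤ y) (hy₁ : y ≤ 1) :
    |2 * lam ^ 2 * y + 4 - 8 * y| ≤ 2 * lam ^ 2 + 12 := by
  rw [abs_le]
  constructor <;> nlinarith [sq_nonneg lam]

theorem sq_two_mul_le_pessSigmoidDisc (ha : 0 ≤ a) (hay : a ≤ y) (hya : y ≤ 1 - a) :
    (2 * a) ^ 2 ≤ pessSigmoidDisc lam y := by
  unfold pessSigmoidDisc
  nlinarith [sq_nonneg (lam * y), mul_le_mul hay (le_sub_comm.1 hya) ha (by linarith)]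

theorem hasDerivAt_invPessSigmoid (hD : 0 < pessSigmoidDisc lam y)
    (hg : 0 < lam * y + √(pessSigmoidDisc lam y)) (hy : y < 1) :
    HasDerivAt (invPessSigmoid lam)
      (2 * ((lam + (2 * lam ^ 2 * y + 4 - 8 * y) / (2 * √(pessSigmoidDisc lam y))) /
        (lam * y + √(pessSigmoidDisc lam y)) + 1 / (1 - y))) y := by
  have hsqrt := (hasDerivAt_pessSigmoidDisc lam y).sqrt hD.ne'
  have hlog₁ := (((hasDerivAt_id y).const_mul lam).add hsqrt).log hg.ne'
  have hlog₂ := (((hasDerivAt_const y (1 : ℝ)).sub (hasDerivAt_id y)).const_mul 2).log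
    (mul_pos two_pos (sub_pos.2 hy)).ne'
  refine ((hlog₁.sub hlog₂).const_mul 2).congr_deriv ?_
  simp only [Pi.add_apply, Pi.sub_apply, id]
  field_simp [(sub_pos.2 hy).ne']
  ring

theorem abs_deriv_invPessSigmoid_le (hlam : 0 ≤ lam) (ha : 0 < a) (hy : y ∈ Set.Icc a (1 - a)) :
    |deriv (invPessSigmoid lam) y| ≤ (lam + 2) / a + (lam ^ 2 + 6) / (2 * a ^ 2) := by
  obtain ⟨hay, hya⟩ := hy
  set D := pessSigmoidDisc lam y
  set D' := 2 * lam ^ 2 * y + 4 - 8 * y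
  have hDa : (2 * a) ^ 2 ≤ D := sq_two_mul_le_pessSigmoidDisc ha.le hay hya
  have hs : 2 * a ≤ √D := (le_sqrt' (by positivity)).2 hDa
  have hg : 2 * a ≤ lam * y + √D := by nlinarith [mul_nonneg hlam (ha.le.trans hay)]
  rw [(hasDerivAt_invPessSigmoid (by nlinarith) (by linarith) (by linarith)).deriv]
  have hD' : |D' / (2 * √D)| ≤ (lam ^ 2 + 6) / (2 * a) := by
    rw [abs_div, abs_of_pos (by linarith : 0 < 2 * √D)]
    calc |D'| / (2 * √D) ≤ (2 * lam ^ 2 + 12) / (2 * (2 * a)) :=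
          div_le_div₀ (by positivity)
            (abs_deriv_pessSigmoidDisc_le (ha.le.trans hay) (by linarith)) (by positivity)
            (by linarith)
      _ = (lam ^ 2 + 6) / (2 * a) := by field_simp; ring
  have hnum : |lam + D' / (2 * √D)| ≤ lam + (lam ^ 2 + 6) / (2 * a) :=
    (abs_add_le _ _).trans (by rw [abs_of_nonneg hlam]; linarith)
  have hfirst : |(lam + D' / (2 * √D)) / (lam * y + √D)| ≤
      (lam + (lam ^ 2 + 6) / (2 * a)) / (2 * a) := by
    rw [abs_div, abs_of_pos (by linarith : 0 < lam * y + √D)]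
    exact div_le_div₀ (by positivity) hnum (by positivity) hg
  have hsecond : |1 / (1 - y)| ≤ 1 / a := by
    rw [abs_of_pos (one_div_pos.2 (by linarith))]
    exact one_div_le_one_div_of_le ha (by linarith)
  calc |2 * ((lam + D' / (2 * √D)) / (lam * y + √D) + 1 / (1 - y))|
      ≤ 2 * ((lam + (lam ^ 2 + 6) / (2 * a)) / (2 * a) + 1 / a) := by
        rw [abs_mul, abs_two]
        gcongr
        exact (abs_add_le _ _).trans (add_le_add hfirst hsecond)
    _ = (lam + 2) / a + (lam ^ 2 + 6) / (2 * a ^ 2) := by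
        field_simp
        ring

end

theorem inv_pess_sigmoid_deriv_bound_general (R lam : ℝ) (hlam : 0 ≤ lam) :
    let a : ℝ := 1 / (exp (2*R) + 1)
    let f : ℝ → ℝ := fun y =>
      2 * (log (lam * y + Real.sqrt (lam^2 * y^2 + 4*y - 4*y^2)) - log (2 * (1 - y)))
    ∀ y ∈ Set.Icc a (1 - a),
      |deriv f y| ≤ (lam + 2) / a + (lam^2 + 6) / (2 * a^2) := by
  intro a f y hy
  exact abs_deriv_invPessSigmoid_le hlam (by positivity) hy

/-- Lipschitz (derivative) bound for the inverse pessimistic sigmoid: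
with `a = 1/(e^{2R}+1)` and
`f(y) = 2·(log(λy + √(λ²y² + 4y - 4y²)) - log(2(1-y)))`, for all
`y ∈ [a, 1-a]` one has `|f'(y)| ≤ (λ+2)/a + (λ²+6)/(2a²)`. -/
theorem inv_pess_sigmoid_deriv_bound (R lam : ℝ) (hR : 0 < R) (hlam : 0 ≤ lam) :
    let a : ℝ := 1 / (exp (2*R) + 1)
    let f : ℝ → ℝ := fun y =>
      2 * (log (lam * y + Real.sqrt (lam^2 * y^2 + 4*y - 4*y^2)) - log (2 * (1 - y)))
    ∀ y ∈ Set.Icc a (1 - a),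
      |deriv f y| ≤ (lam + 2) / a + (lam^2 + 6) / (2 * a^2) :=
  inv_pess_sigmoid_deriv_bound_general R lam hlam
end

section
/- Suboptimality-to-estimation-error conversion (Lemma conversion, core inequality): let X, A be finite, ν₀ ∈ Δ(X), π*, π_data policies with π_data fully supported, and Δ̂, Δ* : X×A×A → ℝ. Suppose (pessimism) Σ_b π_data(b|x)·Δ̂(x,a,b) ≤ Σ_b π_data(b|x)·Δ*(x,a,b) for all x,a. Then for any policy π_out: Σ_x ν₀(x) Σ_{a,b} (π*(a|x) - π_out(a|x))·π_data(b|x)·(Δ*(x,a,b) - Δ̂(x,a,b)) ≤ √(C*·E), where C* = Σ_x ν₀(x) Σ_a π*(a|x)²/π_data(a|x) and E = Σ_x ν₀(x) Σ_a π_data(a|x)·(Σ_b π_data(b|x)(Δ*(x,a,b) - Δ̂(x,a,b)))². -/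
/-!
Write `g(x,a) = ∑_b π_data(b|x) (Δ*(x,a,b) - Δ̂(x,a,b))`; the left-hand side is
`∑_x ν₀(x) ∑_a (π*(a|x) - π_out(a|x)) g(x,a)`. Pessimism says `g ≥ 0`, so the `π_out` part is
nonpositive and can be dropped. The remaining `π*` part is bounded by Cauchy–Schwarz after
splitting `π* g = (π* / √π_data) · (√π_data g)`, which produces exactly `C*` and `E`.
-/

theorem Finset.sq_sum_mul_mul_le_sum_sq_div_mul_sum_mul_sq {ι : Type*} (s : Finset ι)
    (w p u v : ι → ℝ) (hw : ∀ i ∈ s, 0 ≤ w i) (hp : ∀ i ∈ s, 0 < p i) :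
    (∑ i ∈ s, w i * (u i * v i)) ^ 2
      ≤ (∑ i ∈ s, w i * (u i ^ 2 / p i)) * ∑ i ∈ s, w i * (p i * v i ^ 2) := by
  refine Finset.sum_sq_le_sum_mul_sum_of_sq_le_mul s
    (fun i hi => mul_nonneg (hw i hi) (div_nonneg (sq_nonneg _) (hp i hi).le))
    (fun i hi => mul_nonneg (hw i hi) (mul_nonneg (hp i hi).le (sq_nonneg _)))
    (fun i hi => le_of_eq ?_)
  field_simp [(hp i hi).ne']

theorem sum_mul_sum_mul_le_sqrt {X A : Type*} [Fintype X] [Fintype A]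
    (ν : X → ℝ) (p u v : X → A → ℝ) (hν : ∀ x, 0 ≤ ν x) (hp : ∀ x a, 0 < p x a) :
    ∑ x, ν x * ∑ a, u x a * v x a
      ≤ √((∑ x, ν x * ∑ a, u x a ^ 2 / p x a) * ∑ x, ν x * ∑ a, p x a * v x a ^ 2) := by
  have nested_eq_prod : ∀ F : X → A → ℝ,
      ∑ x, ν x * ∑ a, F x a = ∑ q : X × A, ν q.1 * F q.1 q.2 := fun F => by
    simp only [Finset.mul_sum, Fintype.sum_prod_type]
  rw [nested_eq_prod, nested_eq_prod, nested_eq_prod]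
  exact (le_abs_self _).trans <| Real.abs_le_sqrt <|
    Finset.sq_sum_mul_mul_le_sum_sq_div_mul_sum_mul_sq _ (fun q : X × A => ν q.1)
      (fun q : X × A => p q.1 q.2) (fun q : X × A => u q.1 q.2) (fun q : X × A => v q.1 q.2)
      (fun q _ => hν q.1) (fun q _ => hp q.1 q.2)

theorem suboptimality_to_estimation_error_general
    {X A : Type*} [Fintype X] [Fintype A]
    (ν₀ : X → ℝ) (hν : ∀ x, 0 ≤ ν₀ x)
    (πstar πout πdata : X → A → ℝ)
    (hπout : ∀ x a, 0 ≤ πout x a)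
    (hπdata : ∀ x a, 0 < πdata x a)
    (Δhat Δstar : X → A → A → ℝ)
    (hpess : ∀ x a, ∑ b, πdata x b * Δhat x a b ≤ ∑ b, πdata x b * Δstar x a b)
    (Cstar E : ℝ)
    (hC : Cstar = ∑ x, ν₀ x * ∑ a, (πstar x a)^2 / πdata x a)
    (hE : E = ∑ x, ν₀ x * ∑ a, πdata x a *
      (∑ b, πdata x b * (Δstar x a b - Δhat x a b))^2) :
    ∑ x, ν₀ x * ∑ a, ∑ b,
        (πstar x a - πout x a) * πdata x b * (Δstar x a b - Δhat x a b)
      ≤ Real.sqrt (Cstar * E) := by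
  set gap : X → A → ℝ := fun x a => ∑ b, πdata x b * (Δstar x a b - Δhat x a b)
  have gap_nonneg : ∀ x a, 0 ≤ gap x a := fun x a => by
    simpa only [gap, mul_sub, Finset.sum_sub_distrib, sub_nonneg] using hpess x a
  have lhs_eq : ∑ x, ν₀ x * ∑ a, ∑ b,
        (πstar x a - πout x a) * πdata x b * (Δstar x a b - Δhat x a b)
      = ∑ x, ν₀ x * ∑ a, (πstar x a - πout x a) * gap x a := by
    simp only [gap, Finset.mul_sum, mul_assoc]
  have drop_out : ∑ x, ν₀ x * ∑ a, (πstar x a - πout x a) * gap x a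
      ≤ ∑ x, ν₀ x * ∑ a, πstar x a * gap x a := by
    gcongr with x _ a _
    · exact hν x
    · exact gap_nonneg x a
    · exact sub_le_self _ (hπout x a)
  rw [lhs_eq, hC, hE]
  exact drop_out.trans (sum_mul_sum_mul_le_sqrt ν₀ πdata πstar gap hν hπdata)

/-- Suboptimality-to-estimation-error conversion: under the pessimism
hypothesis, the weighted gap between `π*` and `π_out` measured through
`Δ* - Δ̂` is bounded by `√(C*·E)`, where `C*` is the single-policy
concentrability coefficient and `E` the mean-squared estimation error. -/
theorem suboptimality_to_estimation_error
    {X A : Type*} [Fintype X] [Fintype A]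
    (ν₀ : X → ℝ) (hν : ∀ x, 0 ≤ ν₀ x) (hνsum : ∑ x, ν₀ x = 1)
    (πstar πout πdata : X → A → ℝ)
    (hπstar : ∀ x a, 0 ≤ πstar x a) (hπstarsum : ∀ x, ∑ a, πstar x a = 1)
    (hπout : ∀ x a, 0 ≤ πout x a) (hπoutsum : ∀ x, ∑ a, πout x a = 1)
    (hπdata : ∀ x a, 0 < πdata x a) (hπdatasum : ∀ x, ∑ a, πdata x a = 1)
    (Δhat Δstar : X → A → A → ℝ)
    (hpess : ∀ x a, ∑ b, πdata x b * Δhat x a b ≤ ∑ b, πdata x b * Δstar x a b)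
    (Cstar E : ℝ)
    (hC : Cstar = ∑ x, ν₀ x * ∑ a, (πstar x a)^2 / πdata x a)
    (hE : E = ∑ x, ν₀ x * ∑ a, πdata x a *
      (∑ b, πdata x b * (Δstar x a b - Δhat x a b))^2) :
    ∑ x, ν₀ x * ∑ a, ∑ b,
        (πstar x a - πout x a) * πdata x b * (Δstar x a b - Δhat x a b)
      ≤ Real.sqrt (Cstar * E) :=
  suboptimality_to_estimation_error_general ν₀ hν πstar πout πdata hπout hπdata Δhat Δstar hpess
    Cstar E hC hE
end
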